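/- Haar–Kemperman property: let μ be a Borel probability measure on G, inner regular by compact sets and outer regular by open sets, such that for every compact K ⊆ G with μ(K) > 0 the map m_K : t ↦ μ(tK) is continuous at 1_G. Then for every μ-measurable set A with μ(A) > 0 there exists δ > 0 such that μ(tA ∩ A) > 0 for all t with ‖t‖ < δ; in particular B_δ ⊆ AA⁻¹, equivalently tA ∩ A ≠ ∅ whenever ‖t‖ < δ. -/

import Mathlib

open Set Topology TopologicalSpace MeasureTheory Filter Pointwise

/-! Pick a compact `K ⊆ A` of positive measure and an open `U ⊇ K` with `μ U < 2 μ K`.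
For `t` close to `1` we have `tK ⊆ U`, and by continuity of `t ↦ μ(tK)` also
`μ(tK) + μ K > μ U`; since `tK ∪ K ⊆ U`, the sets `tK` and `K` cannot be almost disjoint,
so `μ(tK ∩ K) > 0`. -/

section Measure

variable {α : Type*} [MeasurableSpace α] {μ : Measure α}

theorem measure_inter_pos_of_union_subset {S K U : Set α} (hK : MeasurableSet K)
    (hSKU : S ∪ K ⊆ U) (hU : μ U < μ S + μ K) : 0 < μ (S ∩ K) := by
  by_contra! h
  have hzero : μ (S ∩ K) = 0 := nonpos_iff_eq_zero.mp h
  have hsum : μ S + μ K ≤ μ U := calc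
    μ S + μ K = μ (S ∪ K) + μ (S ∩ K) := (measure_union_add_inter S hK).symm
    _ = μ (S ∪ K) := by rw [hzero, add_zero]
    _ ≤ μ U := measure_mono hSKU
  exact hsum.not_gt hU

theorem MeasureTheory.NullMeasurableSet.exists_isCompact_subset_measure_pos [TopologicalSpace α]
    [OpensMeasurableSpace α] [μ.InnerRegular] {A : Set α} (hA : NullMeasurableSet A μ)
    (hμA : 0 < μ A) : ∃ K ⊆ A, IsCompact K ∧ 0 < μ K := by
  obtain ⟨B, hBA, hBm, hBae⟩ := hA.exists_measurable_subset_ae_eq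
  obtain ⟨K, hKB, hKc, hKpos⟩ :=
    hBm.exists_lt_isCompact (hμA.trans_eq (measure_congr hBae).symm)
  exact ⟨K, hKB.trans hBA, hKc, hKpos⟩

end Measure

section Group

variable {G : Type*} [Group G] [TopologicalSpace G] [IsTopologicalGroup G] [MeasurableSpace G]
  [BorelSpace G] {μ : Measure G}

theorem eventually_measure_image_mul_left_inter_pos [T2Space G] [μ.OuterRegular] {K : Set G}
    (hKc : IsCompact K) (hKpos : 0 < μ K) (hKfin : μ K ≠ ⊤)
    (hcont : ContinuousAt (fun t : G => μ ((t * ·) '' K)) 1) :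
    ∀ᶠ t in 𝓝 (1 : G), 0 < μ ((t * ·) '' K ∩ K) := by
  obtain ⟨U, hKU, hUo, hUlt⟩ := K.exists_isOpen_lt_add hKfin hKpos.ne'
  obtain ⟨V, hV, hVK⟩ := compact_open_separated_mul_left hKc hUo hKU
  have hU : μ U < μ ((1 * ·) '' K) + μ K := by simpa using hUlt
  filter_upwards [(hcont.add continuousAt_const).eventually (eventually_gt_nhds hU), hV]
    with t htU htV
  have htK : (t * ·) '' K ⊆ U := by
    rintro _ ⟨k, hk, rfl⟩
    exact hVK (mul_mem_mul htV hk)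
  exact measure_inter_pos_of_union_subset hKc.measurableSet (union_subset htK hKU) htU

end Group

theorem mem_mul_inv_of_image_mul_left_inter_nonempty {G : Type*} [Group G] {A : Set G} {t : G}
    (h : ((t * ·) '' A ∩ A).Nonempty) : t ∈ A * A⁻¹ := by
  obtain ⟨_, ⟨a, ha, rfl⟩, hta⟩ := h
  simpa using mul_mem_mul hta (inv_mem_inv.mpr ha)

theorem stmt_12_general {G : Type*} [Group G] [MetricSpace G] [IsTopologicalGroup G]
    [MeasurableSpace G] [BorelSpace G]
    (μ : Measure G) [IsProbabilityMeasure μ] [μ.InnerRegular] [μ.OuterRegular]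
    (hcont : ∀ K : Set G, IsCompact K → 0 < μ K →
      ContinuousAt (fun t : G => μ ((t * ·) '' K)) 1)
    (A : Set G) (hA : NullMeasurableSet A μ) (hμA : 0 < μ A) :
    ∃ δ > (0 : ℝ),
      (∀ t : G, dist (1 : G) t < δ → 0 < μ ((t * ·) '' A ∩ A)) ∧
      (∀ t : G, dist (1 : G) t < δ → t ∈ A * A⁻¹) ∧
      (∀ t : G, dist (1 : G) t < δ → ((t * ·) '' A ∩ A).Nonempty) := by
  obtain ⟨K, hKA, hKc, hKpos⟩ := hA.exists_isCompact_subset_measure_pos hμA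
  obtain ⟨δ, hδ, hK⟩ := Metric.eventually_nhds_iff.mp <|
    eventually_measure_image_mul_left_inter_pos hKc hKpos (measure_ne_top μ K)
      (hcont K hKc hKpos)
  have hpos : ∀ t : G, dist (1 : G) t < δ → 0 < μ ((t * ·) '' A ∩ A) := fun t ht =>
    (hK (by rwa [dist_comm])).trans_le
      (measure_mono (inter_subset_inter (image_mono hKA) hKA))
  have hne : ∀ t : G, dist (1 : G) t < δ → ((t * ·) '' A ∩ A).Nonempty := fun t ht =>
    nonempty_of_measure_ne_zero (hpos t ht).ne'
  exact ⟨δ, hδ, hpos,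
    fun t ht => mem_mul_inv_of_image_mul_left_inter_nonempty (hne t ht), hne⟩

/-- Haar–Kemperman property: if `μ` is a regular Borel probability measure on
`G` such that `t ↦ μ(tK)` is continuous at `1` for every compact `K` of
positive measure, then for every `μ`-measurable `A` with `μ(A) > 0` there is
`δ > 0` with `μ(tA ∩ A) > 0` for `‖t‖ < δ`; in particular `B_δ ⊆ AA⁻¹`,
equivalently `tA ∩ A ≠ ∅` for `‖t‖ < δ`. -/
theorem stmt_12 {G : Type*} [Group G] [MetricSpace G] [IsTopologicalGroup G]
    [SeparableSpace G] [MeasurableSpace G] [BorelSpace G]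
    (hd : ∀ x y z : G, dist (x * z) (y * z) = dist x y)
    (μ : Measure G) [IsProbabilityMeasure μ] [μ.InnerRegular] [μ.OuterRegular]
    (hcont : ∀ K : Set G, IsCompact K → 0 < μ K →
      ContinuousAt (fun t : G => μ ((t * ·) '' K)) 1)
    (A : Set G) (hA : NullMeasurableSet A μ) (hμA : 0 < μ A) :
    ∃ δ > (0 : ℝ),
      (∀ t : G, dist (1 : G) t < δ → 0 < μ ((t * ·) '' A ∩ A)) ∧
      (∀ t : G, dist (1 : G) t < δ → t ∈ A * A⁻¹) ∧
      (∀ t : G, dist (1 : G) t < δ → ((t * ·) '' A ∩ A).Nonempty) :=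
  stmt_12_general μ hcont A hA hμA
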